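/- Let p̄ = max{p_{ij} : p_{ij} > 0}, c̄ = max{c_{ij} : p_{ij} > 0}, and N_1 = min{h ∈ ℕ : (p̄ c̄^r)^h < η}. Then for every j ≥ 1 one has φ_{j,r} ≤ φ_{j+1,r} ≤ N^{N_1} φ_{j,r}. -/

import Mathlib

open Filter MeasureTheory
open scoped ENNReal

namespace QM

/-- A finite word is admissible w.r.t. `P` if consecutive transition probabilities
are positive. -/
def Adm {N : ℕ} (P : Matrix (Fin N) (Fin N) ℝ) (σ : List (Fin N)) : Prop :=
  List.Chain' (fun a b => 0 < P a b) σ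

/-- An infinite word is admissible if all consecutive transition probabilities are positive. -/
def AdmInf {N : ℕ} (P : Matrix (Fin N) (Fin N) ℝ) (τ : ℕ → Fin N) : Prop :=
  ∀ h : ℕ, 0 < P (τ h) (τ (h + 1))

/-- `wprod M σ = M σ₁ σ₂ * ⋯ * M σ_{k-1} σ_k`; equals `1` when `σ` has length at most 1. -/
noncomputable def wprod {N : ℕ} (M : Matrix (Fin N) (Fin N) ℝ) (σ : List (Fin N)) : ℝ :=
  ((σ.zip σ.tail).map fun x => M x.1 x.2).prod

/-- Spectral radius of a real square matrix: the largest modulus of a complex eigenvalue. -/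
noncomputable def specRad {ι : Type} [Fintype ι] [DecidableEq ι] (A : Matrix ι ι ℝ) : ℝ :=
  sSup {x : ℝ | ∃ z : ℂ,
    Module.End.HasEigenvalue (Matrix.toLin' (A.map (fun t => (t : ℂ)))) z ∧ x = ‖z‖}

/-- The matrix `A_{G,s}` with entries `(p_{ij} c_{ij}^r)^{s/(s+r)}` (zero when `p_{ij} = 0`). -/
noncomputable def AGs {N : ℕ} (P c : Matrix (Fin N) (Fin N) ℝ) (r s : ℝ) :
    Matrix (Fin N) (Fin N) ℝ :=
  Matrix.of fun i j => if 0 < P i j then (P i j * c i j ^ r) ^ (s / (s + r)) else 0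

/-- `Ψ_G(s)`, the spectral radius of `A_{G,s}`. -/
noncomputable def PsiG {N : ℕ} (P c : Matrix (Fin N) (Fin N) ℝ) (r s : ℝ) : ℝ :=
  specRad (AGs P c r s)

/-- The submatrix of `A_{G,s}` with rows and columns in `H`. -/
noncomputable def AHs {N : ℕ} (P c : Matrix (Fin N) (Fin N) ℝ) (r s : ℝ)
    (H : Finset (Fin N)) : Matrix {i // i ∈ H} {i // i ∈ H} ℝ :=
  Matrix.of fun i j => AGs P c r s i.1 j.1

/-- `Ψ_H(s)`, the spectral radius of `A_{H,s}`. -/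
noncomputable def PsiH {N : ℕ} (P c : Matrix (Fin N) (Fin N) ℝ) (r s : ℝ)
    (H : Finset (Fin N)) : ℝ :=
  specRad (AHs P c r s H)

/-- Edge relation of the directed graph `G` associated with `P`. -/
def Edge {N : ℕ} (P : Matrix (Fin N) (Fin N) ℝ) (i j : Fin N) : Prop := 0 < P i j

/-- Reachability along directed paths all of whose vertices lie in `S`. -/
def ReachIn {N : ℕ} (P : Matrix (Fin N) (Fin N) ℝ) (S : Set (Fin N)) (i j : Fin N) : Prop :=
  Relation.ReflTransGen (fun a b => Edge P a b ∧ a ∈ S ∧ b ∈ S) i j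

/-- A set of vertices is strongly connected (with the inherited edges). -/
def StrConn {N : ℕ} (P : Matrix (Fin N) (Fin N) ℝ) (S : Set (Fin N)) : Prop :=
  ∀ i ∈ S, ∀ j ∈ S, ReachIn P S i j

/-- `H` is a strongly connected component of `G` containing at least one edge. -/
def IsSCC {N : ℕ} (P : Matrix (Fin N) (Fin N) ℝ) (H : Finset (Fin N)) : Prop :=
  StrConn P ↑H ∧ (∀ S : Finset (Fin N), H ⊆ S → StrConn P ↑S → S = H) ∧
    ∃ i ∈ H, ∃ j ∈ H, Edge P i j

/-- `H₁ ≺ H₂` : some vertex of `H₂` can be reached from some vertex of `H₁` by a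
directed path in `G`. -/
def Prec {N : ℕ} (P : Matrix (Fin N) (Fin N) ℝ) (H₁ H₂ : Finset (Fin N)) : Prop :=
  ∃ i ∈ H₁, ∃ j ∈ H₂, Relation.ReflTransGen (Edge P) i j

/-- Irreducibility of `P` : the graph `G` is strongly connected. -/
def Irred {N : ℕ} (P : Matrix (Fin N) (Fin N) ℝ) : Prop :=
  ∀ i j : Fin N, Relation.TransGen (Edge P) i j

/-- `Γ` is a finite maximal antichain in `Ω^*`. -/
def IsMaxAntichain {N : ℕ} (P : Matrix (Fin N) (Fin N) ℝ) (Γ : Finset (List (Fin N))) : Prop :=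
  (∀ σ ∈ Γ, σ ≠ [] ∧ Adm P σ) ∧
    (∀ σ ∈ Γ, ∀ ω ∈ Γ, σ ≠ ω → ¬ σ <+: ω) ∧
    ∀ τ : ℕ → Fin N, AdmInf P τ → ∃ k : ℕ, 0 < k ∧ (List.range k).map τ ∈ Γ

/-- `Γ` is a finite maximal antichain in `H^*`. -/
def IsMaxAntichainIn {N : ℕ} (P : Matrix (Fin N) (Fin N) ℝ) (H : Finset (Fin N))
    (Γ : Finset (List (Fin N))) : Prop :=
  (∀ σ ∈ Γ, σ ≠ [] ∧ Adm P σ ∧ ∀ a ∈ σ, a ∈ H) ∧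
    (∀ σ ∈ Γ, ∀ ω ∈ Γ, σ ≠ ω → ¬ σ <+: ω) ∧
    ∀ τ : ℕ → Fin N, AdmInf P τ → (∀ h, τ h ∈ H) → ∃ k : ℕ, 0 < k ∧ (List.range k).map τ ∈ Γ

/-- `Γ` is a finite maximal antichain in `H^*(i)`. -/
def IsMaxAntichainInAt {N : ℕ} (P : Matrix (Fin N) (Fin N) ℝ) (H : Finset (Fin N)) (i : Fin N)
    (Γ : Finset (List (Fin N))) : Prop :=
  (∀ σ ∈ Γ, σ ≠ [] ∧ Adm P σ ∧ (∀ a ∈ σ, a ∈ H) ∧ σ.head? = some i) ∧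
    (∀ σ ∈ Γ, ∀ ω ∈ Γ, σ ≠ ω → ¬ σ <+: ω) ∧
    ∀ τ : ℕ → Fin N, AdmInf P τ → (∀ h, τ h ∈ H) → τ 0 = i →
      ∃ k : ℕ, 0 < k ∧ (List.range k).map τ ∈ Γ

/-- The `n`-th quantization error of order `r` for a measure on `ℝ^q`. -/
noncomputable def quantErr {q : ℕ} (ν : Measure (EuclideanSpace ℝ (Fin q))) (r : ℝ)
    (n : ℕ) : ℝ :=
  sInf {e : ℝ | ∃ α : Finset (EuclideanSpace ℝ (Fin q)), α.Nonempty ∧ α.card ≤ n ∧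
    e = (∫ x, Metric.infDist x (↑α : Set (EuclideanSpace ℝ (Fin q))) ^ r ∂ν) ^ (1 / r)}

/-- The `s`-dimensional upper quantization coefficient of order `r`,
`limsup_n n^{r/s} e_{n,r}^r`. -/
noncomputable def upperQCoeff {q : ℕ} (ν : Measure (EuclideanSpace ℝ (Fin q)))
    (r s : ℝ) : ℝ≥0∞ :=
  Filter.limsup (fun n : ℕ => ENNReal.ofReal ((n : ℝ) ^ (r / s) * quantErr ν r n ^ r))
    Filter.atTop

/-- The `s`-dimensional lower quantization coefficient of order `r`,
`liminf_n n^{r/s} e_{n,r}^r`. -/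
noncomputable def lowerQCoeff {q : ℕ} (ν : Measure (EuclideanSpace ℝ (Fin q)))
    (r s : ℝ) : ℝ≥0∞ :=
  Filter.liminf (fun n : ℕ => ENNReal.ofReal ((n : ℝ) ^ (r / s) * quantErr ν r n ^ r))
    Filter.atTop

/-- The upper quantization dimension of order `r`. -/
noncomputable def upperQDim {q : ℕ} (ν : Measure (EuclideanSpace ℝ (Fin q))) (r : ℝ) : ℝ :=
  Filter.limsup (fun n : ℕ => Real.log n / (- Real.log (quantErr ν r n))) Filter.atTop

/-- The lower quantization dimension of order `r`. -/
noncomputable def lowerQDim {q : ℕ} (ν : Measure (EuclideanSpace ℝ (Fin q))) (r : ℝ) : ℝ :=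
  Filter.liminf (fun n : ℕ => Real.log n / (- Real.log (quantErr ν r n))) Filter.atTop

/-- `η = min {p_{ij} c_{ij}^r : p_{ij} > 0}`. -/
noncomputable def eta {N : ℕ} (P c : Matrix (Fin N) (Fin N) ℝ) (r : ℝ) : ℝ :=
  sInf {x : ℝ | ∃ i j, 0 < P i j ∧ x = P i j * c i j ^ r}

/-- The finite maximal antichain `Λ_{j,r}`. -/
def Lambda {N : ℕ} (P c : Matrix (Fin N) (Fin N) ℝ) (r : ℝ) (j : ℕ) : Set (List (Fin N)) :=
  {σ | σ ≠ [] ∧ Adm P σ ∧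
    eta P c r ^ j ≤ wprod P σ.dropLast * wprod c σ.dropLast ^ r ∧
    wprod P σ * wprod c σ ^ r < eta P c r ^ j}

/-- `φ_{j,r}`, the cardinality of `Λ_{j,r}`. -/
noncomputable def phi {N : ℕ} (P c : Matrix (Fin N) (Fin N) ℝ) (r : ℝ) (j : ℕ) : ℕ :=
  (Lambda P c r j).ncard

end QM

/-!
Both inequalities come from comparing `Λ_{j,r}` and `Λ_{j+1,r}` inside the tree of admissible
words, where `p_σ c_σ^r` decreases along every branch by a factor in `[η, p̄ c̄^r]` per letter.
Each `Λ_{j,r}` is a prefix antichain, and every word of `Λ_{j,r}` extends to one of `Λ_{j+1,r}`;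
this injects `Λ_{j,r}` into `Λ_{j+1,r}`. Conversely every `ω ∈ Λ_{j+1,r}` has a prefix
`σ ∈ Λ_{j,r}`, and since the weight drops by less than the factor `η` between `σ` and `ω⁻`, while
`N₁` letters already drop it by more than `η`, `ω` is at most `N₁` letters longer than `σ`.
Padding these tails to length `N₁` embeds `Λ_{j+1,r}` into `Λ_{j,r} × Ω_1^{N₁}`.
-/

section PrefixAntichain

variable {α : Type*}

theorem IsAntichain.eq_of_isPrefix_of_isPrefix {S : Set (List α)}
    (hS : IsAntichain (· <+: ·) S) {σ₁ σ₂ ω : List α} (h₁ : σ₁ ∈ S) (h₂ : σ₂ ∈ S)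
    (hσ₁ : σ₁ <+: ω) (hσ₂ : σ₂ <+: ω) : σ₁ = σ₂ := by
  rcases List.prefix_or_prefix_of_prefix hσ₁ hσ₂ with h | h
  · exact hS.eq h₁ h₂ h
  · exact (hS.eq h₂ h₁ h).symm

theorem IsAntichain.ncard_le_ncard_of_forall_isPrefix {S T : Set (List α)}
    (hS : IsAntichain (· <+: ·) S) (hT : T.Finite) (h : ∀ σ ∈ S, ∃ τ ∈ T, σ <+: τ) :
    S.ncard ≤ T.ncard := by
  choose! F hFT hF using h
  refine Set.ncard_le_ncard_of_injOn F hFT (fun σ₁ h₁ σ₂ h₂ heq => ?_) hT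
  exact hS.eq_of_isPrefix_of_isPrefix h₁ h₂ (hF σ₁ h₁) (heq ▸ hF σ₂ h₂)

theorem IsAntichain.ncard_le_ncard_mul_card_pow [Fintype α] [Nonempty α] {S T : Set (List α)}
    (hS : IsAntichain (· <+: ·) S) (hT : T.Finite) {m : ℕ}
    (h : ∀ ω ∈ S, ∃ σ ∈ T, σ <+: ω ∧ ω.length ≤ σ.length + m) :
    S.ncard ≤ T.ncard * Fintype.card α ^ m := by
  choose! F hFT hF hlen using h
  obtain ⟨a⟩ := ‹Nonempty α›
  let pad (δ : List α) : List α := δ ++ List.replicate (m - δ.length) a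
  let g (ω : List α) : List α × List α := (F ω, pad (ω.drop (F ω).length))
  have hg : ∀ ω ∈ S, ω <+: (g ω).1 ++ (g ω).2 := fun ω hω => by
    conv_lhs => rw [← List.prefix_iff_eq_append.mp (hF ω hω)]
    exact (List.prefix_append_right_inj _).mpr (List.prefix_append _ _)
  have hcard : {l : List α | l.length = m}.ncard = Fintype.card α ^ m := by
    rw [← Nat.card_coe_set_eq, ← card_vector, ← Nat.card_eq_fintype_card]
    rfl
  calc S.ncard ≤ (T ×ˢ {l : List α | l.length = m}).ncard := by
        refine Set.ncard_le_ncard_of_injOn g (fun ω hω => ⟨hFT ω hω, ?_⟩)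
          (fun ω₁ h₁ ω₂ h₂ heq => ?_) (hT.prod (List.finite_length_eq α m))
        · have := hlen ω hω
          simp only [g, pad, Set.mem_ofPred_eq, List.length_append, List.length_replicate,
            List.length_drop]
          omega
        · exact hS.eq_of_isPrefix_of_isPrefix h₁ h₂ (heq ▸ hg ω₁ h₁) (hg ω₂ h₂)
    _ = T.ncard * Fintype.card α ^ m := by rw [Set.ncard_prod, hcard]

end PrefixAntichain

namespace QM

variable {N : ℕ} {P W : Matrix (Fin N) (Fin N) ℝ} {b t t' : ℝ}

@[simp]
theorem wprod_nil (M : Matrix (Fin N) (Fin N) ℝ) : wprod M [] = 1 := rfl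

@[simp]
theorem wprod_singleton (M : Matrix (Fin N) (Fin N) ℝ) (a : Fin N) : wprod M [a] = 1 := rfl

@[simp]
theorem wprod_cons_cons (M : Matrix (Fin N) (Fin N) ℝ) (x y : Fin N) (l : List (Fin N)) :
    wprod M (x :: y :: l) = M x y * wprod M (y :: l) := by
  simp [wprod]

theorem wprod_append (M : Matrix (Fin N) (Fin N) ℝ) :
    ∀ (σ : List (Fin N)) (hσ : σ ≠ []) (τ : List (Fin N)),
      wprod M (σ ++ τ) = wprod M σ * wprod M (σ.getLast hσ :: τ)
  | [_], _, _ => by simp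
  | x :: y :: l, _, τ => by
    rw [List.cons_append, List.cons_append, wprod_cons_cons, ← List.cons_append,
      wprod_append M (y :: l) (List.cons_ne_nil _ _), wprod_cons_cons, List.getLast_cons_cons,
      mul_assoc]

theorem Adm.getLast_cons {σ τ : List (Fin N)} (h : Adm P (σ ++ τ)) (hσ : σ ≠ []) :
    Adm P (σ.getLast hσ :: τ) := by
  refine List.IsChain.suffix h ⟨σ.dropLast, ?_⟩
  rw [← List.singleton_append, ← List.append_assoc, List.dropLast_append_getLast]

theorem wprod_nonneg (hW : ∀ i j, 0 < P i j → 0 ≤ W i j) :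
    ∀ {σ : List (Fin N)}, Adm P σ → 0 ≤ wprod W σ
  | [], _ | [_], _ => by simp
  | x :: y :: l, h => by
    obtain ⟨hxy, hl⟩ := List.isChain_cons_cons.mp h
    rw [wprod_cons_cons]
    exact mul_nonneg (hW x y hxy) (wprod_nonneg hW hl)

theorem wprod_le_pow (hW0 : ∀ i j, 0 < P i j → 0 ≤ W i j) (hWb : ∀ i j, 0 < P i j → W i j ≤ b) :
    ∀ {σ : List (Fin N)}, Adm P σ → wprod W σ ≤ b ^ (σ.length - 1)
  | [], _ | [_], _ => by simp
  | x :: y :: l, h => by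
    obtain ⟨hxy, hl⟩ := List.isChain_cons_cons.mp h
    rw [wprod_cons_cons, List.length_cons, List.length_cons, Nat.add_sub_cancel, pow_succ']
    exact mul_le_mul (hWb x y hxy) (wprod_le_pow hW0 hWb hl) (wprod_nonneg hW0 hl)
      ((hW0 x y hxy).trans (hWb x y hxy))

theorem wprod_append_le (hW0 : ∀ i j, 0 < P i j → 0 ≤ W i j)
    (hWb : ∀ i j, 0 < P i j → W i j ≤ b) {σ δ : List (Fin N)} (h : Adm P (σ ++ δ))
    (hσ : σ ≠ []) : wprod W (σ ++ δ) ≤ wprod W σ * b ^ δ.length := by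
  rw [wprod_append W σ hσ]
  exact mul_le_mul_of_nonneg_left (wprod_le_pow hW0 hWb (h.getLast_cons hσ))
    (wprod_nonneg hW0 (h.prefix (List.prefix_append σ δ)))

theorem wprod_mul_rpow_wprod {c : Matrix (Fin N) (Fin N) ℝ} (hc : ∀ i j, 0 < P i j → 0 ≤ c i j)
    (r : ℝ) : ∀ {σ : List (Fin N)}, Adm P σ →
      wprod P σ * wprod c σ ^ r = wprod (Matrix.of fun i j => P i j * c i j ^ r) σ
  | [], _ | [_], _ => by simp
  | x :: y :: l, h => by
    obtain ⟨hxy, hl⟩ := List.isChain_cons_cons.mp h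
    simp only [wprod_cons_cons, Matrix.of_apply,
      Real.mul_rpow (hc x y hxy) (wprod_nonneg hc hl), ← wprod_mul_rpow_wprod hc r hl]
    ring

def levelSet (P W : Matrix (Fin N) (Fin N) ℝ) (t : ℝ) : Set (List (Fin N)) :=
  {σ | σ ≠ [] ∧ Adm P σ ∧ t ≤ wprod W σ.dropLast ∧ wprod W σ < t}

theorem Lambda_eq_levelSet {c : Matrix (Fin N) (Fin N) ℝ} (hc : ∀ i j, 0 < P i j → 0 ≤ c i j)
    (r : ℝ) (j : ℕ) :
    Lambda P c r j = levelSet P (Matrix.of fun i k => P i k * c i k ^ r) (eta P c r ^ j) := by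
  ext σ
  refine and_congr_right fun _ => and_congr_right fun hσ => ?_
  rw [wprod_mul_rpow_wprod hc r hσ, wprod_mul_rpow_wprod hc r (hσ.prefix σ.dropLast_prefix)]

theorem eq_of_isPrefix_of_mem_levelSet (hW0 : ∀ i j, 0 < P i j → 0 ≤ W i j)
    (hW1 : ∀ i j, 0 < P i j → W i j ≤ 1) (htt' : t' ≤ t) {σ τ : List (Fin N)}
    (hσ : σ ∈ levelSet P W t) (hτ : τ ∈ levelSet P W t') (h : τ <+: σ) : τ = σ := by
  obtain ⟨δ, rfl⟩ := h
  obtain rfl | hδ := eq_or_ne δ []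
  · exact (List.append_nil τ).symm
  have hdrop : (τ ++ δ).dropLast = τ ++ δ.dropLast := List.dropLast_append_of_ne_nil hδ
  have hle := wprod_append_le hW0 hW1 (hdrop ▸ hσ.2.1.prefix (List.dropLast_prefix _)) hτ.1
  rw [one_pow, mul_one, ← hdrop] at hle
  linarith [hσ.2.2.1, hτ.2.2.2]

theorem isAntichain_levelSet (hW0 : ∀ i j, 0 < P i j → 0 ≤ W i j)
    (hW1 : ∀ i j, 0 < P i j → W i j ≤ 1) : IsAntichain (· <+: ·) (levelSet P W t) :=
  fun _ hσ _ hτ hne h => hne (eq_of_isPrefix_of_mem_levelSet hW0 hW1 le_rfl hτ hσ h)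

theorem levelSet_finite (hW0 : ∀ i j, 0 < P i j → 0 ≤ W i j)
    (hWb : ∀ i j, 0 < P i j → W i j ≤ b) (hb0 : 0 ≤ b) (hb1 : b < 1) (ht : 0 < t) :
    (levelSet P W t).Finite := by
  obtain ⟨n, hn⟩ := exists_pow_lt_of_lt_one ht hb1
  refine (List.finite_length_le (Fin N) (n + 1)).subset fun σ hσ => ?_
  change σ.length ≤ n + 1
  by_contra! hlen
  have hle := wprod_le_pow hW0 hWb (hσ.2.1.prefix σ.dropLast_prefix)
  rw [List.length_dropLast] at hle
  linarith [hσ.2.2.1, pow_le_pow_of_le_one hb0 hb1.le (show n ≤ σ.length - 1 - 1 by omega)]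

theorem exists_isPrefix_mem_levelSet_of_wprod_lt (ht : t ≤ 1) {ω : List (Fin N)}
    (hω : Adm P ω) (hlt : wprod W ω < t) : ∃ σ ∈ levelSet P W t, σ <+: ω := by
  classical
  -- `σ` is the shortest prefix of `ω` of weight below `t`
  have hex : ∃ n, wprod W (ω.take n) < t := ⟨ω.length, by simpa using hlt⟩
  obtain ⟨k, hk⟩ : ∃ k, Nat.find hex = k + 1 := Nat.exists_eq_succ_of_ne_zero fun h0 => by
    have := Nat.find_spec hex
    rw [h0, List.take_zero, wprod_nil] at this
    linarith
  have hlt' := Nat.find_spec hex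
  rw [hk] at hlt'
  refine ⟨ω.take (k + 1), ⟨fun hnil => ?_, hω.prefix (List.take_prefix _ _), ?_, hlt'⟩,
    List.take_prefix _ _⟩
  · rw [hnil, wprod_nil] at hlt'
    linarith
  · have hkω : k < ω.length := by
      have := Nat.find_min' hex (show wprod W (ω.take ω.length) < t by simpa using hlt)
      omega
    rw [List.take_add_one, List.getElem?_eq_getElem hkω, Option.toList_some, List.dropLast_concat]
    exact not_lt.mp (Nat.find_min hex (by omega))

theorem exists_adm_append (hP : ∀ i, ∃ j, 0 < P i j) {σ : List (Fin N)} (hσ : Adm P σ)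
    (hne : σ ≠ []) : ∀ n : ℕ, ∃ δ : List (Fin N), δ.length = n ∧ Adm P (σ ++ δ)
  | 0 => ⟨[], rfl, by simpa using hσ⟩
  | n + 1 => by
    obtain ⟨δ, hlen, hδ⟩ := exists_adm_append hP hσ hne n
    have hne' : σ ++ δ ≠ [] := by simp [hne]
    obtain ⟨a, ha⟩ := hP ((σ ++ δ).getLast hne')
    refine ⟨δ ++ [a], by simp [hlen], ?_⟩
    rw [← List.append_assoc]
    refine hδ.append (List.isChain_singleton a) ?_
    simpa [List.getLast?_eq_some_getLast hne'] using ha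

theorem exists_mem_levelSet_isPrefix (hP : ∀ i, ∃ j, 0 < P i j)
    (hW0 : ∀ i j, 0 < P i j → 0 ≤ W i j) (hWb : ∀ i j, 0 < P i j → W i j ≤ b) (hb0 : 0 ≤ b)
    (hb1 : b < 1) (ht' : 0 < t') (htt' : t' ≤ t) {σ : List (Fin N)}
    (hσ : σ ∈ levelSet P W t) : ∃ τ ∈ levelSet P W t', σ <+: τ := by
  have hW1 : ∀ i j, 0 < P i j → W i j ≤ 1 := fun i j h => (hWb i j h).trans hb1.le
  obtain ⟨n, hn⟩ := exists_pow_lt_of_lt_one ht' hb1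
  obtain ⟨δ, rfl, hδ⟩ := exists_adm_append hP hσ.2.1 hσ.1 n
  have hlt : wprod W (σ ++ δ) < t' := calc
    _ ≤ b ^ ((σ ++ δ).length - 1) := wprod_le_pow hW0 hWb hδ
    _ ≤ b ^ δ.length := by
      refine pow_le_pow_of_le_one hb0 hb1.le ?_
      have := List.length_pos_iff.mpr hσ.1
      rw [List.length_append]
      omega
    _ < t' := hn
  have ht'1 : t' ≤ 1 := calc
    t' ≤ wprod W σ.dropLast := htt'.trans hσ.2.2.1
    _ ≤ 1 ^ (σ.dropLast.length - 1) := wprod_le_pow hW0 hW1 (hσ.2.1.prefix σ.dropLast_prefix)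
    _ = 1 := one_pow _
  obtain ⟨τ, hτ, hτω⟩ := exists_isPrefix_mem_levelSet_of_wprod_lt ht'1 hδ hlt
  refine ⟨τ, hτ, ?_⟩
  rcases List.prefix_or_prefix_of_prefix (List.prefix_append σ δ) hτω with h | h
  · exact h
  · rw [eq_of_isPrefix_of_mem_levelSet hW0 hW1 htt' hσ hτ h]

theorem exists_mem_levelSet_isPrefix_length_le (hW0 : ∀ i j, 0 < P i j → 0 ≤ W i j)
    (hWb : ∀ i j, 0 < P i j → W i j ≤ b) (hb0 : 0 ≤ b) (hb1 : b ≤ 1) (ht1 : t ≤ 1)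
    (htt' : t' ≤ t) {m : ℕ} (hm : t * b ^ m < t') {ω : List (Fin N)}
    (hω : ω ∈ levelSet P W t') : ∃ σ ∈ levelSet P W t, σ <+: ω ∧ ω.length ≤ σ.length + m := by
  obtain ⟨σ, hσ, δ, rfl⟩ :=
    exists_isPrefix_mem_levelSet_of_wprod_lt ht1 hω.2.1 (hω.2.2.2.trans_le htt')
  refine ⟨σ, hσ, List.prefix_append σ δ, ?_⟩
  obtain rfl | hδ := eq_or_ne δ []
  · simp
  rw [List.length_append, add_le_add_iff_left]
  by_contra! hlen
  have hdrop : (σ ++ δ).dropLast = σ ++ δ.dropLast := List.dropLast_append_of_ne_nil hδ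
  have hσ0 := wprod_nonneg hW0 hσ.2.1
  have := calc
    t' ≤ wprod W (σ ++ δ.dropLast) := hdrop ▸ hω.2.2.1
    _ ≤ wprod W σ * b ^ δ.dropLast.length :=
      wprod_append_le hW0 hWb (hdrop ▸ hω.2.1.prefix (List.dropLast_prefix _)) hσ.1
    _ ≤ t * b ^ m := by
      refine mul_le_mul hσ.2.2.2.le (pow_le_pow_of_le_one hb0 hb1 ?_) (pow_nonneg hb0 _)
        (hσ0.trans hσ.2.2.2.le)
      rw [List.length_dropLast]
      omega
  linarith

theorem ncard_levelSet_le_ncard_levelSet (hP : ∀ i, ∃ j, 0 < P i j)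
    (hW0 : ∀ i j, 0 < P i j → 0 ≤ W i j) (hWb : ∀ i j, 0 < P i j → W i j ≤ b) (hb0 : 0 ≤ b)
    (hb1 : b < 1) (ht' : 0 < t') (htt' : t' ≤ t) :
    (levelSet P W t).ncard ≤ (levelSet P W t').ncard :=
  (isAntichain_levelSet hW0 fun i j h => (hWb i j h).trans hb1.le
    ).ncard_le_ncard_of_forall_isPrefix (levelSet_finite hW0 hWb hb0 hb1 ht') fun _ hσ =>
      exists_mem_levelSet_isPrefix hP hW0 hWb hb0 hb1 ht' htt' hσ

theorem ncard_levelSet_le_ncard_levelSet_mul_pow [NeZero N]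
    (hW0 : ∀ i j, 0 < P i j → 0 ≤ W i j) (hWb : ∀ i j, 0 < P i j → W i j ≤ b) (hb0 : 0 ≤ b)
    (hb1 : b < 1) (ht : 0 < t) (ht1 : t ≤ 1) (htt' : t' ≤ t) {m : ℕ} (hm : t * b ^ m < t') :
    (levelSet P W t').ncard ≤ (levelSet P W t).ncard * N ^ m := by
  simpa using
    (isAntichain_levelSet hW0 fun i j h => (hWb i j h).trans hb1.le).ncard_le_ncard_mul_card_pow
      (levelSet_finite hW0 hWb hb0 hb1 ht) fun _ hω =>
        exists_mem_levelSet_isPrefix_length_le hW0 hWb hb0 hb1.le ht1 htt' hm hω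

theorem finite_edgeWeights (P c : Matrix (Fin N) (Fin N) ℝ) (r : ℝ) :
    {x : ℝ | ∃ i j, 0 < P i j ∧ x = P i j * c i j ^ r}.Finite :=
  (Set.finite_range fun p : Fin N × Fin N => P p.1 p.2 * c p.1 p.2 ^ r).subset <| by
    rintro x ⟨i, j, -, rfl⟩
    exact ⟨(i, j), rfl⟩

theorem eta_le {c : Matrix (Fin N) (Fin N) ℝ} {r : ℝ} {i j : Fin N} (h : 0 < P i j) :
    eta P c r ≤ P i j * c i j ^ r :=
  csInf_le (finite_edgeWeights P c r).bddBelow ⟨i, j, h, rfl⟩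

theorem eta_pos {c : Matrix (Fin N) (Fin N) ℝ} (hc : ∀ i j, 0 < P i j → 0 < c i j) (r : ℝ)
    (hP : ∃ i j, 0 < P i j) : 0 < eta P c r := by
  obtain ⟨i, j, hij⟩ := hP
  obtain ⟨i, j, hij, he⟩ := Set.Nonempty.csInf_mem
    (s := {x : ℝ | ∃ i j, 0 < P i j ∧ x = P i j * c i j ^ r}) ⟨_, i, j, hij, rfl⟩
    (finite_edgeWeights P c r)
  rw [eta, he]
  exact mul_pos hij (Real.rpow_pos_of_pos (hc i j hij) r)

section EdgeWeightBounds

variable {c : Matrix (Fin N) (Fin N) ℝ} {r pbar cbar : ℝ}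

theorem mul_rpow_le_of_isGreatest
    (hpbar : IsGreatest {x : ℝ | ∃ i j, 0 < P i j ∧ x = P i j} pbar)
    (hcbar : IsGreatest {x : ℝ | ∃ i j, 0 < P i j ∧ x = c i j} cbar) (hr : 0 ≤ r)
    (hc : ∀ i j, 0 < P i j → 0 < c i j) {i j : Fin N} (h : 0 < P i j) :
    P i j * c i j ^ r ≤ pbar * cbar ^ r :=
  mul_le_mul (hpbar.2 ⟨i, j, h, rfl⟩)
    (Real.rpow_le_rpow (hc i j h).le (hcbar.2 ⟨i, j, h, rfl⟩) hr)
    (Real.rpow_nonneg (hc i j h).le r) (h.trans_le (hpbar.2 ⟨i, j, h, rfl⟩)).le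

theorem mul_rpow_lt_one_of_isGreatest
    (hpbar : IsGreatest {x : ℝ | ∃ i j, 0 < P i j ∧ x = P i j} pbar)
    (hcbar : IsGreatest {x : ℝ | ∃ i j, 0 < P i j ∧ x = c i j} cbar) (hr : 0 < r)
    (hP1 : ∀ i j, P i j ≤ 1) (hc : ∀ i j, 0 < P i j → 0 < c i j ∧ c i j < 1) :
    pbar * cbar ^ r < 1 := by
  obtain ⟨i, j, -, rfl⟩ := hpbar.1
  obtain ⟨i', j', h', rfl⟩ := hcbar.1
  exact (mul_le_of_le_one_left (Real.rpow_nonneg (hc i' j' h').1.le r) (hP1 i j)).trans_lt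
    (Real.rpow_lt_one (hc i' j' h').1.le (hc i' j' h').2 hr)

end EdgeWeightBounds

end QM

open QM in
theorem phi_growth_general
    {N : ℕ} (hN : 2 ≤ N)
    (P c : Matrix (Fin N) (Fin N) ℝ) (r : ℝ) (hr : 0 < r)
    (hP0 : ∀ i j, 0 ≤ P i j)
    (hProw : ∀ i, ∑ j, P i j = 1)
    (hPcard : ∀ i : Fin N, 2 ≤ {j : Fin N | 0 < P i j}.ncard)
    (hc1 : ∀ i j, 0 < P i j → 0 < c i j ∧ c i j < 1)
    (pbar cbar : ℝ)
    (hpbar : IsGreatest {x : ℝ | ∃ i j, 0 < P i j ∧ x = P i j} pbar)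
    (hcbar : IsGreatest {x : ℝ | ∃ i j, 0 < P i j ∧ x = c i j} cbar)
    (N₁ : ℕ)
    (hN₁ : IsLeast {h : ℕ | (pbar * cbar ^ r) ^ h < QM.eta P c r} N₁)
    :
    ∀ j : ℕ, 1 ≤ j →
      QM.phi P c r j ≤ QM.phi P c r (j + 1) ∧
      QM.phi P c r (j + 1) ≤ N ^ N₁ * QM.phi P c r j := by
  intro j _
  have : NeZero N := ⟨by omega⟩
  have hP : ∀ i, ∃ k, 0 < P i k := fun i =>
    Set.nonempty_of_ncard_ne_zero (s := {k | 0 < P i k}) (by have := hPcard i; omega)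
  obtain ⟨k₀, hP₀⟩ := hP 0
  set W : Matrix (Fin N) (Fin N) ℝ := Matrix.of fun i k => P i k * c i k ^ r
  have hW0 : ∀ i k, 0 < P i k → 0 ≤ W i k := fun i k h =>
    mul_nonneg h.le (Real.rpow_nonneg (hc1 i k h).1.le r)
  have hWb : ∀ i k, 0 < P i k → W i k ≤ pbar * cbar ^ r := fun _ _ =>
    mul_rpow_le_of_isGreatest hpbar hcbar hr.le fun i k h => (hc1 i k h).1
  have hb0 := (hW0 0 k₀ hP₀).trans (hWb 0 k₀ hP₀)
  have hb1 := mul_rpow_lt_one_of_isGreatest hpbar hcbar hr (fun _ _ =>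
    Matrix.le_one_of_mem_rowStochastic (Matrix.mem_rowStochastic_iff_sum.mpr ⟨hP0, hProw⟩)) hc1
  have hη0 : 0 < eta P c r := eta_pos (fun i k h => (hc1 i k h).1) r ⟨0, k₀, hP₀⟩
  have hη1 : eta P c r ≤ 1 := ((eta_le hP₀).trans (hWb 0 k₀ hP₀)).trans hb1.le
  have hηj := pow_le_pow_of_le_one hη0.le hη1 j.le_succ
  rw [phi, phi, Lambda_eq_levelSet (fun i k h => (hc1 i k h).1.le),
    Lambda_eq_levelSet (fun i k h => (hc1 i k h).1.le), mul_comm]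
  refine ⟨ncard_levelSet_le_ncard_levelSet hP hW0 hWb hb0 hb1 (pow_pos hη0 _) hηj,
    ncard_levelSet_le_ncard_levelSet_mul_pow hW0 hWb hb0 hb1 (pow_pos hη0 _)
      (pow_le_one₀ hη0.le hη1) hηj ?_⟩
  rw [pow_succ]
  exact mul_lt_mul_of_pos_left hN₁.1 (pow_pos hη0 _)

open QM in
theorem phi_growth
    {N : ℕ} (hN : 2 ≤ N)
    (P c : Matrix (Fin N) (Fin N) ℝ) (r : ℝ) (hr : 0 < r)
    (hP0 : ∀ i j, 0 ≤ P i j)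
    (hProw : ∀ i, ∑ j, P i j = 1)
    (hPcard : ∀ i : Fin N, 2 ≤ {j : Fin N | 0 < P i j}.ncard)
    (hc1 : ∀ i j, 0 < P i j → 0 < c i j ∧ c i j < 1)
    (hc0 : ∀ i j, P i j = 0 → c i j = 0)
    (pbar cbar : ℝ)
    (hpbar : IsGreatest {x : ℝ | ∃ i j, 0 < P i j ∧ x = P i j} pbar)
    (hcbar : IsGreatest {x : ℝ | ∃ i j, 0 < P i j ∧ x = c i j} cbar)
    (N₁ : ℕ)
    (hN₁ : IsLeast {h : ℕ | (pbar * cbar ^ r) ^ h < QM.eta P c r} N₁)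
    :
    ∀ j : ℕ, 1 ≤ j →
      QM.phi P c r j ≤ QM.phi P c r (j + 1) ∧
      QM.phi P c r (j + 1) ≤ N ^ N₁ * QM.phi P c r j :=
  phi_growth_general hN P c r hr hP0 hProw hPcard hc1 pbar cbar hpbar hcbar N₁ hN₁
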